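/- arXiv:2402.04353 — 7 statements merged into one kernel-verified Lean document; each statement's English description precedes it below -/
import Mathlib

section
/- Let X=(X1,X2) and Y=(Y1,Y2) be two feasible schedules for two agents with monotone valuations such that X and Y are adjacent (|Y_i \ X_i| <= 1 and |X_i \ Y_i| <= 1 for i=1,2). Suppose that in X agent 1 envies agent 2 (v1(X1) < v1(X2)) and in Y agent 1 does not envy agent 2 (v1(Y1) >= v1(Y2)). Then at least one of the four schedules X, Y, X'=(X2,X1), Y'=(Y2,Y1) is EF1. -/
namespace Stmt3

def Indep {χ : Type*} (adj : χ → χ → Prop) (S : Finset χ) : Prop :=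
  ∀ i ∈ S, ∀ j ∈ S, ¬ adj i j

/-- EF1 for the two-agent schedule where agent 1 holds `A` and agent 2 holds `B`. -/
def EF1 {χ : Type*} [DecidableEq χ] (v1 v2 : Finset χ → ℤ) (A B : Finset χ) : Prop :=
  (A.Nonempty → ∃ c ∈ A, v1 (A.erase c) ≥ v1 B) ∧
  (B.Nonempty → ∃ c ∈ B, v2 (B.erase c) ≥ v2 A)

theorem adjacent_envy_switch {χ : Type*} [DecidableEq χ]
    (adj : χ → χ → Prop) (v1 v2 : Finset χ → ℤ)
    -- monotone valuations (chores): larger bundles are weakly worse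
    (hm1 : ∀ C C' : Finset χ, C ⊆ C' → v1 C' ≤ v1 C)
    (hm2 : ∀ C C' : Finset χ, C ⊆ C' → v2 C' ≤ v2 C)
    (X1 X2 Y1 Y2 : Finset χ)
    -- both schedules are feasible
    (hXd : Disjoint X1 X2) (hX1 : Indep adj X1) (hX2 : Indep adj X2)
    (hYd : Disjoint Y1 Y2) (hY1 : Indep adj Y1) (hY2 : Indep adj Y2)
    -- X and Y are adjacent schedules
    (ha1 : (Y1 \ X1).card ≤ 1) (ha1' : (X1 \ Y1).card ≤ 1)
    (ha2 : (Y2 \ X2).card ≤ 1) (ha2' : (X2 \ Y2).card ≤ 1)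
    -- agent 1 envies agent 2 in X but not in Y
    (henvyX : v1 X1 < v1 X2) (hnoenvyY : v1 Y1 ≥ v1 Y2) :
    EF1 v1 v2 X1 X2 ∨ EF1 v1 v2 Y1 Y2 ∨ EF1 v1 v2 X2 X1 ∨ EF1 v1 v2 Y2 Y1 := by
  rcases le_total (v2 X2) (v2 Y1) with h | h
  · -- X' = (X2, X1) is EF1
    right; right; left
    constructor
    · rintro ⟨c, hc⟩
      exact ⟨c, hc, le_trans (le_of_lt henvyX) (hm1 _ _ (Finset.erase_subset _ _))⟩
    · intro hne
      rcases (X1 \ Y1).eq_empty_or_nonempty with he | ⟨c, hc⟩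
      · obtain ⟨c, hc⟩ := hne
        exact ⟨c, hc, le_trans h (le_trans
          (hm2 _ _ (Finset.sdiff_eq_empty_iff_subset.mp he))
          (hm2 _ _ (Finset.erase_subset _ _)))⟩
      · have hmem : c ∈ X1 := (Finset.mem_sdiff.mp hc).1
        have hsub : X1.erase c ⊆ Y1 := by
          intro x hx
          rcases Finset.mem_erase.mp hx with ⟨hxc, hxX⟩
          by_contra hxY
          exact hxc (Finset.card_le_one.mp ha1' x (Finset.mem_sdiff.mpr ⟨hxX, hxY⟩) c hc)
        exact ⟨c, hmem, le_trans h (hm2 _ _ hsub)⟩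
  · -- Y = (Y1, Y2) is EF1
    right; left
    constructor
    · rintro ⟨c, hc⟩
      exact ⟨c, hc, le_trans hnoenvyY (hm1 _ _ (Finset.erase_subset _ _))⟩
    · intro hne
      rcases (Y2 \ X2).eq_empty_or_nonempty with he | ⟨c, hc⟩
      · obtain ⟨c, hc⟩ := hne
        exact ⟨c, hc, le_trans h (le_trans
          (hm2 _ _ (Finset.sdiff_eq_empty_iff_subset.mp he))
          (hm2 _ _ (Finset.erase_subset _ _)))⟩
      · have hmem : c ∈ Y2 := (Finset.mem_sdiff.mp hc).1
        have hsub : Y2.erase c ⊆ X2 := by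
          intro x hx
          rcases Finset.mem_erase.mp hx with ⟨hxc, hxY⟩
          by_contra hxX
          exact hxc (Finset.card_le_one.mp ha2 x (Finset.mem_sdiff.mpr ⟨hxY, hxX⟩) c hc)
        exact ⟨c, hmem, le_trans h (hm2 _ _ hsub)⟩

end Stmt3
end

section
/- Let P be a path graph on m vertices c1,...,cm (edges {c_h, c_{h+1}}). Define schedules X_1,...,X_m by: X_1 = (odd-indexed vertices, even-indexed vertices); X_m = (even-indexed vertices, odd-indexed vertices); and for 2 <= i <= m-1, X_i assigns even-indexed vertices c_h with h < i and odd-indexed vertices c_h with h > i to the first bundle, odd-indexed c_h with h < i and even-indexed c_h with h > i to the second bundle, leaving c_i unassigned. Then: (1) every X_i is a feasible schedule (both bundles are independent sets in P); (2) every X_i is maximal (no unassigned vertex can be added to either bundle keeping it independent); (3) consecutive schedules X_{i-1} and X_i are adjacent; (4) the bundles of X_m are the swap of the bundles of X_1. -/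
namespace Stmt4

/-- Path graph on vertices 1,...,m with edges {h, h+1}. -/
def adj (a b : ℕ) : Prop := a + 1 = b ∨ b + 1 = a

def Indep (S : Finset ℕ) : Prop := ∀ a ∈ S, ∀ b ∈ S, ¬ adj a b

/-- First bundle of the i-th schedule in the coloring sequence. -/
def R (m i : ℕ) : Finset ℕ :=
  (Finset.Icc 1 m).filter (fun h =>
    if i = 1 then Odd h
    else if i = m then Even h
    else ((h < i ∧ Even h) ∨ (i < h ∧ Odd h)))

/-- Second bundle of the i-th schedule in the coloring sequence. -/
def B (m i : ℕ) : Finset ℕ :=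
  (Finset.Icc 1 m).filter (fun h =>
    if i = 1 then Even h
    else if i = m then Odd h
    else ((h < i ∧ Odd h) ∨ (i < h ∧ Even h)))

theorem path_coloring_sequence (m : ℕ) (hm : 2 ≤ m) :
    -- (1) every schedule is feasible
    (∀ i ∈ Finset.Icc 1 m,
      Disjoint (R m i) (B m i) ∧ Indep (R m i) ∧ Indep (B m i)) ∧
    -- (2) every schedule is maximal
    (∀ i ∈ Finset.Icc 1 m, ∀ c ∈ Finset.Icc 1 m, c ∉ R m i → c ∉ B m i →
      ¬ Indep (insert c (R m i)) ∧ ¬ Indep (insert c (B m i))) ∧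
    -- (3) consecutive schedules are adjacent
    (∀ i, 2 ≤ i → i ≤ m →
      ((R m i) \ (R m (i - 1))).card ≤ 1 ∧ ((R m (i - 1)) \ (R m i)).card ≤ 1 ∧
      ((B m i) \ (B m (i - 1))).card ≤ 1 ∧ ((B m (i - 1)) \ (B m i)).card ≤ 1) ∧
    -- (4) the last schedule is the bundle-swap of the first
    (R m m = B m 1 ∧ B m m = R m 1) := by
  refine ⟨?_, ?_, ?_, ?_⟩
  · -- feasibility
    intro i hi
    simp only [Finset.mem_Icc] at hi
    refine ⟨?_, ?_, ?_⟩
    · rw [Finset.disjoint_left]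
      intro a haR haB
      simp only [R, B, Finset.mem_filter, Finset.mem_Icc, Nat.even_iff, Nat.odd_iff]
        at haR haB
      split_ifs at haR haB <;> omega
    · intro a ha b hb hab
      simp only [R, Finset.mem_filter, Finset.mem_Icc, Nat.even_iff, Nat.odd_iff] at ha hb
      rcases hab with h | h <;> split_ifs at ha hb <;> omega
    · intro a ha b hb hab
      simp only [B, Finset.mem_filter, Finset.mem_Icc, Nat.even_iff, Nat.odd_iff] at ha hb
      rcases hab with h | h <;> split_ifs at ha hb <;> omega
  · -- maximality
    intro i hi c hc hcR hcB
    simp only [Finset.mem_Icc] at hi hc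
    simp only [R, B, Finset.mem_filter, Finset.mem_Icc, Nat.even_iff, Nat.odd_iff]
      at hcR hcB
    by_cases hi1 : i = 1
    · rw [if_pos hi1] at hcR hcB
      omega
    by_cases him : i = m
    · rw [if_neg hi1, if_pos him] at hcR hcB
      omega
    rw [if_neg hi1, if_neg him] at hcR hcB
    have hci : c = i := by omega
    have h2i : 2 ≤ i := by omega
    have him' : i + 1 ≤ m := by omega
    constructor
    · intro h
      by_cases hpar : i % 2 = 0
      · exact h c (Finset.mem_insert_self _ _) (i + 1)
          (Finset.mem_insert_of_mem (by
            simp only [R, Finset.mem_filter, Finset.mem_Icc, if_neg hi1, if_neg him,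
              Nat.even_iff, Nat.odd_iff]
            omega)) (Or.inl (by omega))
      · exact h c (Finset.mem_insert_self _ _) (i - 1)
          (Finset.mem_insert_of_mem (by
            simp only [R, Finset.mem_filter, Finset.mem_Icc, if_neg hi1, if_neg him,
              Nat.even_iff, Nat.odd_iff]
            omega)) (Or.inr (by omega))
    · intro h
      by_cases hpar : i % 2 = 0
      · exact h c (Finset.mem_insert_self _ _) (i - 1)
          (Finset.mem_insert_of_mem (by
            simp only [B, Finset.mem_filter, Finset.mem_Icc, if_neg hi1, if_neg him,
              Nat.even_iff, Nat.odd_iff]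
            omega)) (Or.inr (by omega))
      · exact h c (Finset.mem_insert_self _ _) (i + 1)
          (Finset.mem_insert_of_mem (by
            simp only [B, Finset.mem_filter, Finset.mem_Icc, if_neg hi1, if_neg him,
              Nat.even_iff, Nat.odd_iff]
            omega)) (Or.inl (by omega))
  · -- adjacency
    intro i h2 him
    refine ⟨?_, ?_, ?_, ?_⟩ <;>
    · rw [Finset.card_le_one]
      intro a ha b hb
      simp only [Finset.mem_sdiff, R, B, Finset.mem_filter, Finset.mem_Icc, not_and,
        Nat.even_iff, Nat.odd_iff] at ha hb
      split_ifs at ha hb <;> omega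
  · have hm1 : m ≠ 1 := by omega
    constructor <;> ext h <;> simp [R, B, hm1]

end Stmt4
end

section
/- For two agents with monotone valuations over chores whose conflict graph is a path graph, there always exists a schedule that is simultaneously EF1 and maximal. -/
namespace Stmt5

def adj (m : ℕ) (i j : Fin m) : Prop := (i : ℕ) + 1 = (j : ℕ) ∨ (j : ℕ) + 1 = (i : ℕ)

def Indep (m : ℕ) (S : Finset (Fin m)) : Prop := ∀ i ∈ S, ∀ j ∈ S, ¬ adj m i j

def Ap (m k : ℕ) : Finset (Fin m) :=
  Finset.univ.filter (fun i => ((i:ℕ) % 2 = 1 ∧ (i:ℕ) < k) ∨ ((i:ℕ) % 2 = 0 ∧ k < (i:ℕ)))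

def Bp (m k : ℕ) : Finset (Fin m) :=
  Finset.univ.filter (fun i => ((i:ℕ) % 2 = 0 ∧ (i:ℕ) < k) ∨ ((i:ℕ) % 2 = 1 ∧ k < (i:ℕ)))

def Ev (m : ℕ) : Finset (Fin m) := Finset.univ.filter (fun i => (i:ℕ) % 2 = 0)

def Od (m : ℕ) : Finset (Fin m) := Finset.univ.filter (fun i => (i:ℕ) % 2 = 1)

@[simp] lemma mem_Ap {m k : ℕ} {i : Fin m} :
    i ∈ Ap m k ↔ (((i:ℕ) % 2 = 1 ∧ (i:ℕ) < k) ∨ ((i:ℕ) % 2 = 0 ∧ k < (i:ℕ))) := by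
  simp [Ap]

@[simp] lemma mem_Bp {m k : ℕ} {i : Fin m} :
    i ∈ Bp m k ↔ (((i:ℕ) % 2 = 0 ∧ (i:ℕ) < k) ∨ ((i:ℕ) % 2 = 1 ∧ k < (i:ℕ))) := by
  simp [Bp]

@[simp] lemma mem_Ev {m : ℕ} {i : Fin m} : i ∈ Ev m ↔ (i:ℕ) % 2 = 0 := by simp [Ev]

@[simp] lemma mem_Od {m : ℕ} {i : Fin m} : i ∈ Od m ↔ (i:ℕ) % 2 = 1 := by simp [Od]

def feasible (m : ℕ) (X1 X2 : Finset (Fin m)) : Prop :=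
  Disjoint X1 X2 ∧ Indep m X1 ∧ Indep m X2 ∧
    ∀ c : Fin m, c ∉ X1 → c ∉ X2 → ¬ Indep m (insert c X1) ∧ ¬ Indep m (insert c X2)

lemma feasible_symm {m : ℕ} {X Y : Finset (Fin m)} (h : feasible m X Y) : feasible m Y X :=
  ⟨h.1.symm, h.2.2.1, h.2.1, fun c hc1 hc2 => (h.2.2.2 c hc2 hc1).symm⟩

lemma feas_EO (m : ℕ) : feasible m (Ev m) (Od m) := by
  refine ⟨?_, ?_, ?_, ?_⟩
  · rw [Finset.disjoint_left]; intro a ha hb; simp at ha hb; omega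
  · intro i hi j hj; simp at hi hj; simp [adj]; omega
  · intro i hi j hj; simp at hi hj; simp [adj]; omega
  · intro c hc1 hc2; simp at hc1 hc2; omega

lemma feas_S (m k : ℕ) (hk1 : 1 ≤ k) (hk2 : k + 2 ≤ m) : feasible m (Ap m k) (Bp m k) := by
  refine ⟨?_, ?_, ?_, ?_⟩
  · rw [Finset.disjoint_left]; intro a ha hb; simp at ha hb; omega
  · intro i hi j hj; simp at hi hj; simp [adj]; omega
  · intro i hi j hj; simp at hi hj; simp [adj]; omega
  · intro c hc1 hc2
    simp only [mem_Ap, mem_Bp] at hc1 hc2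
    have hc : (c:ℕ) = k := by omega
    rcases Nat.even_or_odd k with hk | hk
    · have hk' : k % 2 = 0 := Nat.even_iff.mp hk
      constructor
      · intro hI
        refine hI c (Finset.mem_insert_self _ _) ⟨k-1, by omega⟩
          (Finset.mem_insert_of_mem ?_) ?_
        · simp; omega
        · simp [adj]; omega
      · intro hI
        refine hI c (Finset.mem_insert_self _ _) ⟨k+1, by omega⟩
          (Finset.mem_insert_of_mem ?_) ?_
        · simp; omega
        · simp [adj]; omega
    · have hk' : k % 2 = 1 := Nat.odd_iff.mp hk
      constructor
      · intro hI
        refine hI c (Finset.mem_insert_self _ _) ⟨k+1, by omega⟩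
          (Finset.mem_insert_of_mem ?_) ?_
        · simp; omega
        · simp [adj]; omega
      · intro hI
        refine hI c (Finset.mem_insert_self _ _) ⟨k-1, by omega⟩
          (Finset.mem_insert_of_mem ?_) ?_
        · simp; omega
        · simp [adj]; omega


def Goal (m : ℕ) (v1 v2 : Finset (Fin m) → ℤ) : Prop :=
  ∃ X1 X2 : Finset (Fin m),
      Disjoint X1 X2 ∧ Indep m X1 ∧ Indep m X2 ∧
      (∀ c : Fin m, c ∉ X1 → c ∉ X2 →
        ¬ Indep m (insert c X1) ∧ ¬ Indep m (insert c X2)) ∧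
      (X1.Nonempty → ∃ c ∈ X1, v1 (X1.erase c) ≥ v1 X2) ∧
      (X2.Nonempty → ∃ c ∈ X2, v2 (X2.erase c) ≥ v2 X1)

section Main

variable {m : ℕ} {v1 v2 : Finset (Fin m) → ℤ}

lemma build (X1 X2 : Finset (Fin m)) (hf : feasible m X1 X2)
    (e1 : X1.Nonempty → ∃ c ∈ X1, v1 (X1.erase c) ≥ v1 X2)
    (e2 : X2.Nonempty → ∃ c ∈ X2, v2 (X2.erase c) ≥ v2 X1) : Goal m v1 v2 :=
  ⟨X1, X2, hf.1, hf.2.1, hf.2.2.1, hf.2.2.2, e1, e2⟩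

lemma ef1_of_ge {v : Finset (Fin m) → ℤ} (hm : ∀ C C' : Finset (Fin m), C ⊆ C' → v C' ≤ v C)
    {X Y : Finset (Fin m)} (h : v Y ≤ v X) :
    X.Nonempty → ∃ c ∈ X, v (X.erase c) ≥ v Y := by
  rintro ⟨c, hc⟩
  exact ⟨c, hc, le_trans h (hm _ _ (Finset.erase_subset c X))⟩

lemma flip_lemma (P Q : ℕ → Prop) (N : ℕ) (hN : 1 ≤ N) (hall : ∀ j ≤ N, P j ∨ Q j)
    (hexcl : ∀ j, ¬(P j ∧ Q j)) (h0 : P 0 ↔ Q N) :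
    ∃ j, j < N ∧ ((P j ∧ Q (j+1)) ∨ (Q j ∧ P (j+1))) := by
  by_contra hc
  push_neg at hc
  have key : ∀ j, j ≤ N → (P 0 → P j) ∧ (Q 0 → Q j) := by
    intro j
    induction j with
    | zero => exact fun _ => ⟨id, id⟩
    | succ n ih =>
      intro hj
      obtain ⟨ihP, ihQ⟩ := ih (by omega)
      have hcn := hc n (by omega)
      constructor
      · intro h0'
        rcases hall (n+1) hj with h | h
        · exact h
        · exact absurd h (hcn.1 (ihP h0'))
      · intro h0'
        rcases hall (n+1) hj with h | h
        · exact absurd h (hcn.2 (ihQ h0'))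
        · exact h
  rcases hall 0 (by omega) with h | h
  · exact hexcl N ⟨(key N le_rfl).1 h, h0.mp h⟩
  · exact hexcl 0 ⟨h0.mpr ((key N le_rfl).2 h), h⟩


end Main

section Cases

variable {m : ℕ} {v1 v2 : Finset (Fin m) → ℤ}
  (HM1 : ∀ C C' : Finset (Fin m), C ⊆ C' → v1 C' ≤ v1 C)
  (HM2 : ∀ C C' : Finset (Fin m), C ⊆ C' → v2 C' ≤ v2 C)


-- interior A-step subset facts (j odd)
lemma subA1 {j : ℕ} (hj3 : j + 3 ≤ m) (hodd : j % 2 = 1) :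
    (Ap m (j+1)).erase ⟨j, by omega⟩ ⊆ Ap m j := by
  intro x hx
  simp only [Finset.mem_erase, mem_Ap, Ne, Fin.ext_iff] at hx ⊢
  omega

lemma subA2 {j : ℕ} (hj3 : j + 3 ≤ m) (hodd : j % 2 = 1) :
    (Ap m j).erase ⟨j+1, by omega⟩ ⊆ Ap m (j+1) := by
  intro x hx
  simp only [Finset.mem_erase, mem_Ap, Ne, Fin.ext_iff] at hx ⊢
  omega

lemma Beq {j : ℕ} (hodd : j % 2 = 1) : Bp m (j+1) = Bp m j := by
  ext x
  simp only [mem_Bp]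
  omega

lemma subB1 {j : ℕ} (hj3 : j + 3 ≤ m) (hev : j % 2 = 0) :
    (Bp m (j+1)).erase ⟨j, by omega⟩ ⊆ Bp m j := by
  intro x hx
  simp only [Finset.mem_erase, mem_Bp, Ne, Fin.ext_iff] at hx ⊢
  omega

lemma subB2 {j : ℕ} (hj3 : j + 3 ≤ m) (hev : j % 2 = 0) :
    (Bp m j).erase ⟨j+1, by omega⟩ ⊆ Bp m (j+1) := by
  intro x hx
  simp only [Finset.mem_erase, mem_Bp, Ne, Fin.ext_iff] at hx ⊢
  omega

lemma Aeq {j : ℕ} (hev : j % 2 = 0) : Ap m (j+1) = Ap m j := by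
  ext x
  simp only [mem_Ap]
  omega

include HM1 HM2

lemma intA_PQ (j : ℕ) (hj1 : 1 ≤ j) (hj3 : j + 3 ≤ m) (hodd : j % 2 = 1)
    (hP2 : v2 (Bp m j) < v2 (Ap m j))
    (hQ1 : v1 (Ap m (j+1)) < v1 (Bp m (j+1))) : Goal m v1 v2 := by
  refine build (Bp m (j+1)) (Ap m (j+1))
    (feasible_symm (feas_S m (j+1) (by omega) (by omega)))
    (ef1_of_ge HM1 hQ1.le) ?_
  intro _
  refine ⟨⟨j, by omega⟩, by simp [mem_Ap]; omega, ?_⟩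
  have h1 := HM2 _ _ (subA1 hj3 hodd)
  rw [Beq hodd]
  have := hP2
  linarith

lemma intA_QP (j : ℕ) (hj1 : 1 ≤ j) (hj3 : j + 3 ≤ m) (hodd : j % 2 = 1)
    (hQ1 : v1 (Ap m j) < v1 (Bp m j))
    (hP2 : v2 (Bp m (j+1)) < v2 (Ap m (j+1))) : Goal m v1 v2 := by
  refine build (Bp m j) (Ap m j)
    (feasible_symm (feas_S m j (by omega) (by omega)))
    (ef1_of_ge HM1 hQ1.le) ?_
  intro _
  refine ⟨⟨j+1, by omega⟩, by simp [mem_Ap]; omega, ?_⟩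
  have h1 := HM2 _ _ (subA2 hj3 hodd)
  rw [← Beq hodd]
  linarith

lemma intB_PQ (j : ℕ) (hj1 : 1 ≤ j) (hj3 : j + 3 ≤ m) (hev : j % 2 = 0)
    (hP1 : v1 (Bp m j) < v1 (Ap m j))
    (hQ2 : v2 (Ap m (j+1)) < v2 (Bp m (j+1))) : Goal m v1 v2 := by
  refine build (Ap m j) (Bp m j) (feas_S m j (by omega) (by omega))
    (ef1_of_ge HM1 hP1.le) ?_
  intro _
  refine ⟨⟨j+1, by omega⟩, by simp [mem_Bp]; omega, ?_⟩
  have h1 := HM2 _ _ (subB2 hj3 hev)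
  rw [Aeq hev] at hQ2
  linarith

lemma intB_QP (j : ℕ) (hj1 : 1 ≤ j) (hj3 : j + 3 ≤ m) (hev : j % 2 = 0)
    (hQ2 : v2 (Ap m j) < v2 (Bp m j))
    (hP1 : v1 (Bp m (j+1)) < v1 (Ap m (j+1))) : Goal m v1 v2 := by
  refine build (Ap m (j+1)) (Bp m (j+1)) (feas_S m (j+1) (by omega) (by omega))
    (ef1_of_ge HM1 hP1.le) ?_
  intro _
  refine ⟨⟨j, by omega⟩, by simp [mem_Bp]; omega, ?_⟩
  have h1 := HM2 _ _ (subB1 hj3 hev)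
  rw [Aeq hev]
  linarith


-- left endpoint facts
omit HM1 HM2 in
lemma eqL (hm3 : 3 ≤ m) : Ap m 1 = (Ev m).erase ⟨0, by omega⟩ := by
  ext x
  simp only [Finset.mem_erase, mem_Ap, mem_Ev, Ne, Fin.ext_iff]
  omega

omit HM1 HM2 in
lemma subL2 (hm3 : 3 ≤ m) : (Od m).erase ⟨1, by omega⟩ ⊆ Bp m 1 := by
  intro x hx
  simp only [Finset.mem_erase, mem_Od, mem_Bp, Ne, Fin.ext_iff] at hx ⊢
  omega

omit HM1 HM2 in
lemma subL3 (hm3 : 3 ≤ m) : (Bp m 1).erase ⟨0, by omega⟩ ⊆ Od m := by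
  intro x hx
  simp only [Finset.mem_erase, mem_Od, mem_Bp, Ne, Fin.ext_iff] at hx ⊢
  omega

lemma left_PQ (hm3 : 3 ≤ m) (hP1 : v1 (Od m) < v1 (Ev m))
    (hQ2 : v2 (Ap m 1) < v2 (Bp m 1)) : Goal m v1 v2 := by
  refine build (Ev m) (Od m) (feas_EO m) (ef1_of_ge HM1 hP1.le) ?_
  intro _
  refine ⟨⟨1, by omega⟩, by simp, ?_⟩
  have h1 := HM2 _ _ (subL2 hm3)
  have h2 : v2 (Ev m) ≤ v2 (Ap m 1) := by
    rw [eqL hm3]; exact HM2 _ _ (Finset.erase_subset _ _)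
  linarith

lemma left_QP (hm3 : 3 ≤ m) (hQ1 : v1 (Ev m) < v1 (Od m)) (hQ2 : v2 (Ev m) < v2 (Od m))
    (hP2 : v2 (Bp m 1) < v2 (Ap m 1)) : Goal m v1 v2 := by
  rcases le_total (v1 (Ap m 1)) (v1 (Od m)) with hle | hge
  · refine build (Bp m 1) (Ap m 1)
      (feasible_symm (feas_S m 1 (by omega) (by omega)))
      ?_ (ef1_of_ge HM2 hP2.le)
    intro _
    refine ⟨⟨0, by omega⟩, by simp, ?_⟩
    have h1 := HM1 _ _ (subL3 hm3)
    linarith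
  · refine build (Ev m) (Od m) (feas_EO m) ?_ ?_
    · intro _
      refine ⟨⟨0, by omega⟩, by simp, ?_⟩
      rw [← eqL hm3]
      linarith
    · intro _
      refine ⟨⟨1, by omega⟩, by simp, ?_⟩
      have h1 : v2 (Od m) ≤ v2 ((Od m).erase ⟨1, by omega⟩) :=
        HM2 _ _ (Finset.erase_subset _ _)
      linarith

-- right endpoint, m odd
omit HM1 HM2 in
lemma subRo1 (hm3 : 3 ≤ m) (hmo : m % 2 = 1) :
    (Od m).erase ⟨m-2, by omega⟩ ⊆ Ap m (m-2) := by
  intro x hx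
  have := x.isLt
  simp only [Finset.mem_erase, mem_Od, mem_Ap, Ne, Fin.ext_iff] at hx ⊢
  omega

omit HM1 HM2 in
lemma subRo2 (hm3 : 3 ≤ m) (hmo : m % 2 = 1) :
    (Ap m (m-2)).erase ⟨m-1, by omega⟩ ⊆ Od m := by
  intro x hx
  have := x.isLt
  simp only [Finset.mem_erase, mem_Od, mem_Ap, Ne, Fin.ext_iff] at hx ⊢
  omega

omit HM1 HM2 in
lemma eqRo (hm3 : 3 ≤ m) (hmo : m % 2 = 1) :
    Bp m (m-2) = (Ev m).erase ⟨m-1, by omega⟩ := by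
  ext x
  have := x.isLt
  simp only [Finset.mem_erase, mem_Ev, mem_Bp, Ne, Fin.ext_iff]
  omega

lemma rightOdd_PQ (hm3 : 3 ≤ m) (hmo : m % 2 = 1)
    (hPK2 : v2 (Bp m (m-2)) < v2 (Ap m (m-2)))
    (hQN1 : v1 (Od m) < v1 (Ev m)) : Goal m v1 v2 := by
  refine build (Ev m) (Od m) (feas_EO m) (ef1_of_ge HM1 hQN1.le) ?_
  intro _
  refine ⟨⟨m-2, by omega⟩, by simp; omega, ?_⟩
  have h1 := HM2 _ _ (subRo1 hm3 hmo)
  have h2 : v2 (Ev m) ≤ v2 (Bp m (m-2)) := by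
    rw [eqRo hm3 hmo]; exact HM2 _ _ (Finset.erase_subset _ _)
  linarith

lemma rightOdd_QP (hm3 : 3 ≤ m) (hmo : m % 2 = 1)
    (hQK1 : v1 (Ap m (m-2)) < v1 (Bp m (m-2)))
    (hPN1 : v1 (Ev m) < v1 (Od m)) : Goal m v1 v2 := by
  rcases le_total (v2 (Od m)) (v2 (Bp m (m-2))) with hge | hle
  · refine build (Od m) (Ev m) (feasible_symm (feas_EO m)) (ef1_of_ge HM1 hPN1.le) ?_
    intro _
    refine ⟨⟨m-1, by omega⟩, by simp; omega, ?_⟩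
    rw [← eqRo hm3 hmo]
    linarith
  · refine build (Bp m (m-2)) (Ap m (m-2))
      (feasible_symm (feas_S m (m-2) (by omega) (by omega)))
      (ef1_of_ge HM1 hQK1.le) ?_
    intro _
    refine ⟨⟨m-1, by omega⟩, by simp; omega, ?_⟩
    have h1 := HM2 _ _ (subRo2 hm3 hmo)
    linarith

-- right endpoint, m even
omit HM1 HM2 in
lemma eqRe (hm3 : 3 ≤ m) (hme : m % 2 = 0) :
    Ap m (m-2) = (Od m).erase ⟨m-1, by omega⟩ := by
  ext x
  have := x.isLt
  simp only [Finset.mem_erase, mem_Od, mem_Ap, Ne, Fin.ext_iff]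
  omega

omit HM1 HM2 in
lemma subRe1 (hm3 : 3 ≤ m) (hme : m % 2 = 0) :
    (Bp m (m-2)).erase ⟨m-1, by omega⟩ ⊆ Ev m := by
  intro x hx
  have := x.isLt
  simp only [Finset.mem_erase, mem_Ev, mem_Bp, Ne, Fin.ext_iff] at hx ⊢
  omega

omit HM1 HM2 in
lemma subRe2 (hm3 : 3 ≤ m) (hme : m % 2 = 0) :
    (Ev m).erase ⟨m-2, by omega⟩ ⊆ Bp m (m-2) := by
  intro x hx
  have := x.isLt
  simp only [Finset.mem_erase, mem_Ev, mem_Bp, Ne, Fin.ext_iff] at hx ⊢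
  omega

lemma rightEven_PQ (hm3 : 3 ≤ m) (hme : m % 2 = 0)
    (hPK1 : v1 (Bp m (m-2)) < v1 (Ap m (m-2)))
    (hQN1 : v1 (Od m) < v1 (Ev m)) : Goal m v1 v2 := by
  rcases le_total (v2 (Ev m)) (v2 (Ap m (m-2))) with hge | hle
  · refine build (Ev m) (Od m) (feas_EO m) (ef1_of_ge HM1 hQN1.le) ?_
    intro _
    refine ⟨⟨m-1, by omega⟩, by simp; omega, ?_⟩
    rw [← eqRe hm3 hme]
    linarith
  · refine build (Ap m (m-2)) (Bp m (m-2)) (feas_S m (m-2) (by omega) (by omega))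
      (ef1_of_ge HM1 hPK1.le) ?_
    intro _
    refine ⟨⟨m-1, by omega⟩, by simp; omega, ?_⟩
    have h1 := HM2 _ _ (subRe1 hm3 hme)
    linarith

lemma rightEven_QP (hm3 : 3 ≤ m) (hme : m % 2 = 0)
    (hQK2 : v2 (Ap m (m-2)) < v2 (Bp m (m-2)))
    (hPN1 : v1 (Ev m) < v1 (Od m)) : Goal m v1 v2 := by
  refine build (Od m) (Ev m) (feasible_symm (feas_EO m)) (ef1_of_ge HM1 hPN1.le) ?_
  intro _
  refine ⟨⟨m-2, by omega⟩, by simp; omega, ?_⟩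
  have h1 := HM2 _ _ (subRe2 hm3 hme)
  have h2 : v2 (Od m) ≤ v2 (Ap m (m-2)) := by
    rw [eqRe hm3 hme]; exact HM2 _ _ (Finset.erase_subset _ _)
  linarith

-- base case m ≤ 2
lemma base_small (hm : m ≤ 2) : Goal m v1 v2 := by
  refine build (Ev m) (Od m) (feas_EO m) ?_ ?_
  · rintro ⟨c, hc⟩
    refine ⟨c, hc, ?_⟩
    have hE : (Ev m).erase c = ∅ := by
      refine Finset.eq_empty_of_forall_notMem (fun x hx => ?_)
      have h1 := x.isLt
      have h2 := c.isLt
      simp only [mem_Ev] at hc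
      simp only [Finset.mem_erase, mem_Ev, Ne, Fin.ext_iff] at hx
      omega
    rw [hE]
    exact HM1 _ _ (Finset.empty_subset _)
  · rintro ⟨c, hc⟩
    refine ⟨c, hc, ?_⟩
    have hE : (Od m).erase c = ∅ := by
      refine Finset.eq_empty_of_forall_notMem (fun x hx => ?_)
      have h1 := x.isLt
      have h2 := c.isLt
      simp only [mem_Od] at hc
      simp only [Finset.mem_erase, mem_Od, Ne, Fin.ext_iff] at hx
      omega
    rw [hE]
    exact HM2 _ _ (Finset.empty_subset _)


lemma good_case (X Y : Finset (Fin m)) (hf : feasible m X Y)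
    (hnP : ¬(v1 Y < v1 X ∧ v2 Y < v2 X))
    (hnQ : ¬(v1 X < v1 Y ∧ v2 X < v2 Y)) : Goal m v1 v2 := by
  rcases lt_trichotomy (v1 X) (v1 Y) with h | h | h
  · have h2 : v2 Y ≤ v2 X := not_lt.mp (fun hh => hnQ ⟨h, hh⟩)
    exact build Y X (feasible_symm hf) (ef1_of_ge HM1 h.le) (ef1_of_ge HM2 h2)
  · rcases le_total (v2 X) (v2 Y) with h2 | h2
    · exact build X Y hf (ef1_of_ge HM1 h.ge) (ef1_of_ge HM2 h2)
    · exact build Y X (feasible_symm hf) (ef1_of_ge HM1 h.le) (ef1_of_ge HM2 h2)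
  · have h2 : v2 X ≤ v2 Y := not_lt.mp (fun hh => hnP ⟨h, hh⟩)
    exact build X Y hf (ef1_of_ge HM1 h.le) (ef1_of_ge HM2 h2)

end Cases

def Xa (m j : ℕ) : Finset (Fin m) :=
  if j = 0 then Ev m else if j = m - 1 then Od m else Ap m j

def Xb (m j : ℕ) : Finset (Fin m) :=
  if j = 0 then Od m else if j = m - 1 then Ev m else Bp m j

lemma feas_X {m : ℕ} (hm3 : 3 ≤ m) (j : ℕ) (hj : j ≤ m - 1) :
    feasible m (Xa m j) (Xb m j) := by
  unfold Xa Xb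
  split_ifs with h1 h2
  · exact feas_EO m
  · exact feasible_symm (feas_EO m)
  · exact feas_S m j (by omega) (by omega)

lemma main_lemma (m : ℕ) (v1 v2 : Finset (Fin m) → ℤ)
    (HM1 : ∀ C C' : Finset (Fin m), C ⊆ C' → v1 C' ≤ v1 C)
    (HM2 : ∀ C C' : Finset (Fin m), C ⊆ C' → v2 C' ≤ v2 C) : Goal m v1 v2 := by
  by_cases hsm : m ≤ 2
  · exact base_small HM1 HM2 hsm
  have hm3 : 3 ≤ m := by omega
  set P : ℕ → Prop := fun j => v1 (Xb m j) < v1 (Xa m j) ∧ v2 (Xb m j) < v2 (Xa m j) with hP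
  set Q : ℕ → Prop := fun j => v1 (Xa m j) < v1 (Xb m j) ∧ v2 (Xa m j) < v2 (Xb m j) with hQ
  have ea0 : Xa m 0 = Ev m := by simp [Xa]
  have eb0 : Xb m 0 = Od m := by simp [Xb]
  have hne : m - 1 ≠ 0 := by omega
  have eaN : Xa m (m-1) = Od m := by simp [Xa, hne]
  have ebN : Xb m (m-1) = Ev m := by simp [Xb, hne]
  by_cases hg : ∀ j ≤ m - 1, P j ∨ Q j
  · have hexcl : ∀ j, ¬(P j ∧ Q j) := by
      rintro j ⟨hp, hq⟩
      exact absurd hq.1 (not_lt.mpr hp.1.le)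
    have h0 : P 0 ↔ Q (m-1) := by
      rw [hP, hQ]
      simp only [ea0, eb0, eaN, ebN]
    obtain ⟨j, hjN, hflip⟩ := flip_lemma P Q (m-1) (by omega) hg hexcl h0
    by_cases hj0 : j = 0
    · subst hj0
      have ea1 : Xa m 1 = Ap m 1 := by
        have h1 : (1:ℕ) ≠ m - 1 := by omega
        simp [Xa, h1]
      have eb1 : Xb m 1 = Bp m 1 := by
        have h1 : (1:ℕ) ≠ m - 1 := by omega
        simp [Xb, h1]
      rw [hP, hQ] at hflip
      simp only [ea0, eb0, ea1, eb1] at hflip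
      rcases hflip with ⟨hp, hq⟩ | ⟨hq, hp⟩
      · exact left_PQ HM1 HM2 hm3 hp.1 hq.2
      · exact left_QP HM1 HM2 hm3 hq.1 hq.2 hp.2
    by_cases hjR : j + 1 = m - 1
    · have hj' : j = m - 2 := by omega
      subst hj'
      have eaK : Xa m (m-2) = Ap m (m-2) := by
        have h1 : m - 2 ≠ 0 := by omega
        have h2 : m - 2 ≠ m - 1 := by omega
        simp [Xa, h1, h2]
      have ebK : Xb m (m-2) = Bp m (m-2) := by
        have h1 : m - 2 ≠ 0 := by omega
        have h2 : m - 2 ≠ m - 1 := by omega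
        simp [Xb, h1, h2]
      have hstep : m - 2 + 1 = m - 1 := by omega
      rw [hP, hQ] at hflip
      rw [hstep] at hflip
      simp only [eaK, ebK, eaN, ebN] at hflip
      rcases Nat.mod_two_eq_zero_or_one m with hme | hmo
      · rcases hflip with ⟨hp, hq⟩ | ⟨hq, hp⟩
        · exact rightEven_PQ HM1 HM2 hm3 hme hp.1 hq.1
        · exact rightEven_QP HM1 HM2 hm3 hme hq.2 hp.1
      · rcases hflip with ⟨hp, hq⟩ | ⟨hq, hp⟩
        · exact rightOdd_PQ HM1 HM2 hm3 hmo hp.2 hq.1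
        · exact rightOdd_QP HM1 HM2 hm3 hmo hq.1 hp.1
    · -- interior
      have hj1 : 1 ≤ j := by omega
      have hj3 : j + 3 ≤ m := by omega
      have eaj : Xa m j = Ap m j := by
        have h2 : j ≠ m - 1 := by omega
        simp [Xa, hj0, h2]
      have ebj : Xb m j = Bp m j := by
        have h2 : j ≠ m - 1 := by omega
        simp [Xb, hj0, h2]
      have eaj' : Xa m (j+1) = Ap m (j+1) := by
        have h1 : j + 1 ≠ 0 := by omega
        simp [Xa, h1, hjR]
      have ebj' : Xb m (j+1) = Bp m (j+1) := by
        have h1 : j + 1 ≠ 0 := by omega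
        simp [Xb, h1, hjR]
      rw [hP, hQ] at hflip
      simp only [eaj, ebj, eaj', ebj'] at hflip
      rcases Nat.mod_two_eq_zero_or_one j with hje | hjo
      · rcases hflip with ⟨hp, hq⟩ | ⟨hq, hp⟩
        · exact intB_PQ HM1 HM2 j hj1 hj3 hje hp.1 hq.2
        · exact intB_QP HM1 HM2 j hj1 hj3 hje hq.2 hp.1
      · rcases hflip with ⟨hp, hq⟩ | ⟨hq, hp⟩
        · exact intA_PQ HM1 HM2 j hj1 hj3 hjo hp.2 hq.1
        · exact intA_QP HM1 HM2 j hj1 hj3 hjo hq.1 hp.2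
  · push_neg at hg
    obtain ⟨j, hj, hnpq⟩ := hg
    rw [hP, hQ] at hnpq
    exact good_case HM1 HM2 _ _ (feas_X hm3 j hj) hnpq.1 hnpq.2

theorem EF1_maximal_exists_two_agents_path (m : ℕ)
    (v1 v2 : Finset (Fin m) → ℤ)
    -- monotone (chores) valuations with non-positive values
    (hm1 : ∀ C C' : Finset (Fin m), C ⊆ C' → v1 C' ≤ v1 C)
    (hm2 : ∀ C C' : Finset (Fin m), C ⊆ C' → v2 C' ≤ v2 C)
    (hn1 : ∀ C : Finset (Fin m), v1 C ≤ 0)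
    (hn2 : ∀ C : Finset (Fin m), v2 C ≤ 0) :
    ∃ X1 X2 : Finset (Fin m),
      -- feasible
      Disjoint X1 X2 ∧ Indep m X1 ∧ Indep m X2 ∧
      -- maximal
      (∀ c : Fin m, c ∉ X1 → c ∉ X2 →
        ¬ Indep m (insert c X1) ∧ ¬ Indep m (insert c X2)) ∧
      -- EF1
      (X1.Nonempty → ∃ c ∈ X1, v1 (X1.erase c) ≥ v1 X2) ∧
      (X2.Nonempty → ∃ c ∈ X2, v2 (X2.erase c) ≥ v2 X1) := by
  exact main_lemma m v1 v2 hm1 hm2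

end Stmt5
end

section
/- Suppose there exists a sequence of maximal feasible schedules X_1, ..., X_k for two agents such that consecutive schedules are adjacent and the last schedule is the bundle-swap of the first (R_1 = B_k and B_1 = R_k). Then for any monotone valuations of the two agents, at least one of the schedules X_i or a bundle-swap of some X_i is an EF1 and maximal schedule. -/
namespace Stmt6

def Indep {χ : Type*} (adj : χ → χ → Prop) (S : Finset χ) : Prop :=
  ∀ i ∈ S, ∀ j ∈ S, ¬ adj i j

def IsMaximal {χ : Type*} [DecidableEq χ] (adj : χ → χ → Prop) (A B : Finset χ) : Prop :=
  ∀ c : χ, c ∉ A → c ∉ B → ¬ Indep adj (insert c A) ∧ ¬ Indep adj (insert c B)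

def EF1 {χ : Type*} [DecidableEq χ] (v1 v2 : Finset χ → ℤ) (A B : Finset χ) : Prop :=
  (A.Nonempty → ∃ c ∈ A, v1 (A.erase c) ≥ v1 B) ∧
  (B.Nonempty → ∃ c ∈ B, v2 (B.erase c) ≥ v2 A)

def cond {χ : Type*} [DecidableEq χ] (v : Finset χ → ℤ) (A B : Finset χ) : Prop :=
  A.Nonempty → ∃ c ∈ A, v (A.erase c) ≥ v B

lemma not_both {χ : Type*} [DecidableEq χ] (v : Finset χ → ℤ)
    (hm : ∀ C C' : Finset χ, C ⊆ C' → v C' ≤ v C)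
    (A B : Finset χ) (h1 : ¬ cond v A B) (h2 : ¬ cond v B A) : False := by
  simp only [cond, not_forall, not_exists] at h1 h2
  push_neg at h1 h2
  obtain ⟨hA, hA'⟩ := h1
  obtain ⟨hB, hB'⟩ := h2
  obtain ⟨c, hc⟩ := hA
  obtain ⟨c', hc'⟩ := hB
  have e1 := hA' c hc
  have e2 := hB' c' hc'
  have e3 : v B ≤ v (B.erase c') := hm _ _ (Finset.erase_subset _ _)
  have e4 : v A ≤ v (A.erase c) := hm _ _ (Finset.erase_subset _ _)
  linarith

lemma pick {χ : Type*} [DecidableEq χ] {S T : Finset χ}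
    (hS : S.Nonempty) (h : (S \ T).card ≤ 1) : ∃ c ∈ S, S.erase c ⊆ T := by
  by_cases hst : S \ T = ∅
  · obtain ⟨c, hc⟩ := hS
    exact ⟨c, hc, (Finset.erase_subset _ _).trans
      ((Finset.sdiff_eq_empty_iff_subset).mp hst)⟩
  · have hpos : 0 < (S \ T).card := Finset.card_pos.mpr (Finset.nonempty_of_ne_empty hst)
    obtain ⟨g, hg⟩ := Finset.card_eq_one.mp (le_antisymm h hpos)
    have hgS : g ∈ S := by
      have : g ∈ S \ T := hg ▸ Finset.mem_singleton_self g
      exact (Finset.mem_sdiff.mp this).1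
    refine ⟨g, hgS, fun x hx => ?_⟩
    obtain ⟨hxg, hxS⟩ := Finset.mem_erase.mp hx
    by_contra hxT
    have : x ∈ S \ T := Finset.mem_sdiff.mpr ⟨hxS, hxT⟩
    rw [hg, Finset.mem_singleton] at this
    exact hxg this

lemma switch {χ : Type*} [DecidableEq χ] (v : Finset χ → ℤ)
    (hm : ∀ C C' : Finset χ, C ⊆ C' → v C' ≤ v C)
    (A B A' B' : Finset χ)
    (h1 : ¬ cond v B A) (h2 : ¬ cond v A' B')
    (c1 : (A' \ A).card ≤ 1) (c2 : (B \ B').card ≤ 1) : False := by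
  simp only [cond, not_forall, not_exists] at h1 h2
  push_neg at h1 h2
  obtain ⟨hB, hB'⟩ := h1
  obtain ⟨hA', hA''⟩ := h2
  obtain ⟨c', hc'A, hsub1⟩ := pick hA' c1
  obtain ⟨c, hcB, hsub2⟩ := pick hB c2
  have e1 : v A ≤ v (A'.erase c') := hm _ _ hsub1
  have e2 : v B' ≤ v (B.erase c) := hm _ _ hsub2
  have e3 := hA'' c' hc'A
  have e4 := hB' c hcB
  linarith

lemma find_switch (Q : ℕ → Prop) : ∀ m : ℕ, Q 0 → ¬ Q m → ∃ j < m, Q j ∧ ¬ Q (j + 1) := by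
  intro m
  induction m with
  | zero => intro h0 hm; exact absurd h0 hm
  | succ n ih =>
    intro h0 hm
    by_cases hn : Q n
    · exact ⟨n, Nat.lt_succ_self n, hn, hm⟩
    · obtain ⟨j, hj, hQ⟩ := ih h0 hn
      exact ⟨j, hj.trans (Nat.lt_succ_self n), hQ⟩

theorem sequence_gives_EF1_maximal {χ : Type*} [DecidableEq χ]
    (adj : χ → χ → Prop) (v1 v2 : Finset χ → ℤ)
    -- monotone (chores) valuations
    (hm1 : ∀ C C' : Finset χ, C ⊆ C' → v1 C' ≤ v1 C)
    (hm2 : ∀ C C' : Finset χ, C ⊆ C' → v2 C' ≤ v2 C)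
    (k : ℕ) (hk : 0 < k)
    (X : Fin k → Finset χ × Finset χ)
    -- each schedule is feasible and maximal
    (hfeas : ∀ i, Disjoint (X i).1 (X i).2 ∧ Indep adj (X i).1 ∧ Indep adj (X i).2)
    (hmax : ∀ i, IsMaximal adj (X i).1 (X i).2)
    -- consecutive schedules are adjacent
    (hadj : ∀ i : Fin k, ∀ h : (i : ℕ) + 1 < k,
      ((X ⟨(i : ℕ) + 1, h⟩).1 \ (X i).1).card ≤ 1 ∧
      ((X i).1 \ (X ⟨(i : ℕ) + 1, h⟩).1).card ≤ 1 ∧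
      ((X ⟨(i : ℕ) + 1, h⟩).2 \ (X i).2).card ≤ 1 ∧
      ((X i).2 \ (X ⟨(i : ℕ) + 1, h⟩).2).card ≤ 1)
    -- the last schedule is the bundle-swap of the first
    (hswap1 : (X ⟨0, hk⟩).1 = (X ⟨k - 1, Nat.sub_lt hk one_pos⟩).2)
    (hswap2 : (X ⟨0, hk⟩).2 = (X ⟨k - 1, Nat.sub_lt hk one_pos⟩).1) :
    ∃ i : Fin k,
      (EF1 v1 v2 (X i).1 (X i).2 ∧ IsMaximal adj (X i).1 (X i).2) ∨
      (EF1 v1 v2 (X i).2 (X i).1 ∧ IsMaximal adj (X i).2 (X i).1) := by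
  by_contra hcon
  -- maximality holds for the swap as well
  have hmax' : ∀ i : Fin k, IsMaximal adj (X i).2 (X i).1 := by
    intro i c hc2 hc1
    exact ⟨(hmax i c hc1 hc2).2, (hmax i c hc1 hc2).1⟩
  have h1 : ∀ i : Fin k, ¬ (cond v1 (X i).1 (X i).2 ∧ cond v2 (X i).2 (X i).1) := by
    intro i hc
    have hEF : EF1 v1 v2 (X i).1 (X i).2 := by
      unfold EF1
      exact ⟨hc.1, hc.2⟩
    exact hcon ⟨i, Or.inl ⟨hEF, hmax i⟩⟩
  have h2 : ∀ i : Fin k, ¬ (cond v1 (X i).2 (X i).1 ∧ cond v2 (X i).1 (X i).2) := by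
    intro i hc
    have hEF : EF1 v1 v2 (X i).2 (X i).1 := by
      unfold EF1
      exact ⟨hc.1, hc.2⟩
    exact hcon ⟨i, Or.inr ⟨hEF, hmax' i⟩⟩
  -- exactly one side of agent 1's EF1 condition holds at each schedule
  have key : ∀ i : Fin k,
      (cond v1 (X i).1 (X i).2 ∧ ¬ cond v1 (X i).2 (X i).1) ∨
      (¬ cond v1 (X i).1 (X i).2 ∧ cond v1 (X i).2 (X i).1) := by
    intro i
    by_cases hAB : cond v1 (X i).1 (X i).2
    · left
      refine ⟨hAB, fun hBA => ?_⟩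
      by_cases h2AB : cond v2 (X i).1 (X i).2
      · exact h2 i ⟨hBA, h2AB⟩
      · have h2BA : cond v2 (X i).2 (X i).1 := by
          by_contra hc
          exact not_both v2 hm2 _ _ h2AB hc
        exact h1 i ⟨hAB, h2BA⟩
    · right
      refine ⟨hAB, ?_⟩
      by_contra hc
      exact not_both v1 hm1 _ _ hAB hc
  set last : Fin k := ⟨k - 1, Nat.sub_lt hk one_pos⟩ with hlastdef
  have hS0eq : cond v1 (X ⟨0, hk⟩).1 (X ⟨0, hk⟩).2 ↔ cond v1 (X last).2 (X last).1 := by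
    rw [hswap1, hswap2]
  have hsum : k - 1 + 1 = k := Nat.succ_pred_eq_of_pos hk
  by_cases hS0 : cond v1 (X ⟨0, hk⟩).1 (X ⟨0, hk⟩).2
  · -- agent 1 fine at start, not fine (with bundle 1) at the end
    have hSlast : ¬ cond v1 (X last).1 (X last).2 := by
      intro hc
      rcases key last with ⟨_, hn⟩ | ⟨hn, _⟩
      · exact hn (hS0eq.mp hS0)
      · exact hn hc
    set Q : ℕ → Prop := fun n => ∀ h : n < k, cond v1 (X ⟨n, h⟩).1 (X ⟨n, h⟩).2 with hQ
    have hQ0 : Q 0 := fun h => hS0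
    have hQlast : ¬ Q (k - 1) := fun hq => hSlast (hq _)
    obtain ⟨j, hjlt, hQj, hQj1⟩ := find_switch Q (k - 1) hQ0 hQlast
    have hj1k : j + 1 < k := by omega
    have hjk : j < k := by omega
    have hSj : cond v1 (X ⟨j, hjk⟩).1 (X ⟨j, hjk⟩).2 := hQj hjk
    have hSj1 : ¬ cond v1 (X ⟨j + 1, hj1k⟩).1 (X ⟨j + 1, hj1k⟩).2 := by
      intro hc
      exact hQj1 (fun h => hc)
    have hnBA : ¬ cond v1 (X ⟨j, hjk⟩).2 (X ⟨j, hjk⟩).1 := by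
      rcases key ⟨j, hjk⟩ with ⟨_, hn⟩ | ⟨hn, _⟩
      · exact hn
      · exact absurd hSj hn
    have hadjj := hadj ⟨j, hjk⟩ hj1k
    exact switch v1 hm1 (X ⟨j, hjk⟩).1 (X ⟨j, hjk⟩).2
      (X ⟨j + 1, hj1k⟩).1 (X ⟨j + 1, hj1k⟩).2 hnBA hSj1 hadjj.1 hadjj.2.2.2
  · -- agent 1 not fine at start, fine at the end
    have hSlast : cond v1 (X last).1 (X last).2 := by
      by_contra hc
      rcases key last with ⟨hn, _⟩ | ⟨_, hn⟩
      · exact hc hn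
      · exact hS0 (hS0eq.mpr hn)
    set Q : ℕ → Prop := fun n => ∀ h : n < k, ¬ cond v1 (X ⟨n, h⟩).1 (X ⟨n, h⟩).2 with hQ
    have hQ0 : Q 0 := fun h => hS0
    have hQlast : ¬ Q (k - 1) := fun hq => (hq _) hSlast
    obtain ⟨j, hjlt, hQj, hQj1⟩ := find_switch Q (k - 1) hQ0 hQlast
    have hj1k : j + 1 < k := by omega
    have hjk : j < k := by omega
    have hSj : ¬ cond v1 (X ⟨j, hjk⟩).1 (X ⟨j, hjk⟩).2 := hQj hjk
    have hSj1 : cond v1 (X ⟨j + 1, hj1k⟩).1 (X ⟨j + 1, hj1k⟩).2 := by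
      by_contra hc
      exact hQj1 (fun h => hc)
    have hnBA : ¬ cond v1 (X ⟨j + 1, hj1k⟩).2 (X ⟨j + 1, hj1k⟩).1 := by
      rcases key ⟨j + 1, hj1k⟩ with ⟨_, hn⟩ | ⟨hn, _⟩
      · exact hn
      · exact absurd hSj1 hn
    have hadjj := hadj ⟨j, hjk⟩ hj1k
    exact switch v1 hm1 (X ⟨j, hjk⟩).2 (X ⟨j, hjk⟩).1
      (X ⟨j + 1, hj1k⟩).2 (X ⟨j + 1, hj1k⟩).1 hSj hnBA hadjj.2.2.1 hadjj.2.1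
  done

end Stmt6
end

section
/- Let a path graph have each vertex labeled heavy or light, and let a meta agent representing a pair of agents receive, via the described round-robin picking of leftmost available chores with at least two meta agents, a set of chores forming a disjoint union of isolated vertices and edges where each edge joins one heavy and one light chore, with the total number of heavy chores even and the total number of light chores even. Then the chores can be partitioned between the two constituent agents such that each agent gets exactly half of the heavy chores, exactly half of the light chores, and no agent receives two adjacent chores. -/
/-!
In any graph it suffices that `#heavy ≡ #light (mod 2)`: then one side can get exactly
`⌈#heavy / 2⌉` heavy and `⌊#light / 2⌋` light chores. Induct by deleting an edge `{x, y}` with `x`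
heavy and `y` light. Neither endpoint has another neighbour, so one of them can join that side and
the other the opposite side: the side takes `x` if the number of remaining heavy chores is even
and `y` if it is odd. Once no edge is left every subset is independent, and the two counts can
be chosen freely.
-/

namespace Stmt15

/-- Path graph on ℕ: chores h and h+1 conflict. -/
def adj (a b : ℕ) : Prop := a + 1 = b ∨ b + 1 = a

def Indep (S : Finset ℕ) : Prop := ∀ a ∈ S, ∀ b ∈ S, ¬ adj a b

open Finset SimpleGraph

section Split

variable {α : Type*}

lemma _root_.SimpleGraph.IsIndepSet.insert_of_forall_not_adj {G : SimpleGraph α} {s : Set α}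
    {a : α} (hs : G.IsIndepSet s) (ha : ∀ b ∈ s, ¬ G.Adj a b) : G.IsIndepSet (insert a s) :=
  Set.pairwise_insert.2 ⟨hs, fun b hb _ => ⟨ha b hb, fun h => ha b hb h.symm⟩⟩

lemma exists_adj_true_false {G : SimpleGraph α} {S : Finset α} (f : α → Bool)
    (hcol : ∀ a b : α, a ∈ S → b ∈ S → G.Adj a b → f a ≠ f b)
    (hE : ¬ ∀ a ∈ S, ∀ b ∈ S, ¬ G.Adj a b) :
    ∃ x ∈ S, ∃ y ∈ S, G.Adj x y ∧ f x = true ∧ f y = false := by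
  push Not at hE
  obtain ⟨a, ha, b, hb, hab⟩ := hE
  have hfab := (hcol a b ha hb hab).symm
  cases hfa : f a
  · exact ⟨b, hb, a, ha, hab.symm, by simpa [hfa] using hfab, hfa⟩
  · exact ⟨a, ha, b, hb, hab, hfa, by simpa [hfa] using hfab⟩

variable [DecidableEq α]

lemma exists_subset_card_filter_eq (S : Finset α) (f : α → Bool) {k m : ℕ}
    (hk : k ≤ #(S.filter (f · = true))) (hm : m ≤ #(S.filter (f · = false))) :
    ∃ A ⊆ S, #(A.filter (f · = true)) = k ∧ #(A.filter (f · = false)) = m := by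
  obtain ⟨A₁, h₁, rfl⟩ := exists_subset_card_eq hk
  obtain ⟨A₂, h₂, rfl⟩ := exists_subset_card_eq hm
  have hA₁ : ∀ c ∈ A₁, f c = true := fun c hc => (mem_filter.1 (h₁ hc)).2
  have hA₂ : ∀ c ∈ A₂, f c = false := fun c hc => (mem_filter.1 (h₂ hc)).2
  refine ⟨A₁ ∪ A₂, union_subset (h₁.trans (filter_subset _ _)) (h₂.trans (filter_subset _ _)),
    ?_, ?_⟩
  · rw [filter_union, filter_true_of_mem hA₁, filter_false_of_mem (by simp_all), union_empty]
  · rw [filter_union, filter_true_of_mem hA₂, filter_false_of_mem (by simp_all), empty_union]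

lemma card_filter_insert_of_notMem {A : Finset α} {a : α} (p : α → Prop) [DecidablePred p]
    (ha : a ∉ A) : #((insert a A).filter p) = #(A.filter p) + if p a then 1 else 0 := by
  by_cases h : p a <;> simp [filter_insert, h, ha]

lemma card_filter_sdiff_add_card_filter {S A : Finset α} (p : α → Prop) [DecidablePred p]
    (hAS : A ⊆ S) : #((S \ A).filter p) + #(A.filter p) = #(S.filter p) := by
  rw [← card_union_of_disjoint (disjoint_filter_filter sdiff_disjoint), ← filter_union,
    sdiff_union_of_subset hAS]

variable (G : SimpleGraph α)

def IsIndepSplit (S A : Finset α) : Prop :=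
  A ⊆ S ∧ G.IsIndepSet (A : Set α) ∧ G.IsIndepSet ((S \ A : Finset α) : Set α)

variable {G}

lemma isIndepSplit_of_forall_not_adj {S A : Finset α} (hS : ∀ a ∈ S, ∀ b ∈ S, ¬ G.Adj a b)
    (hAS : A ⊆ S) : IsIndepSplit G S A :=
  ⟨hAS, fun a ha b hb _ => hS a (hAS ha) b (hAS hb),
    fun a ha b hb _ => hS a (sdiff_subset ha) b (sdiff_subset hb)⟩

lemma IsIndepSplit.insert_of_isolated_edge {S A : Finset α} {u v : α} (hu : u ∈ S)
    (hu_nbr : ∀ c ∈ S, G.Adj u c → c = v) (hv_nbr : ∀ c ∈ S, G.Adj v c → c = u)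
    (h : IsIndepSplit G (S \ {u, v}) A) : IsIndepSplit G S (insert u A) := by
  obtain ⟨hAT, hA, hB⟩ := h
  refine ⟨insert_subset hu (hAT.trans sdiff_subset), ?_, ?_⟩
  · rw [coe_insert]
    refine hA.insert_of_forall_not_adj fun c hc hadj => ?_
    have hcT := hAT hc
    simp only [mem_sdiff, mem_insert, mem_singleton] at hcT
    exact hcT.2 (Or.inr (hu_nbr c hcT.1 hadj))
  · have hsub : S \ insert u A ⊆ insert v ((S \ {u, v}) \ A) := by
      intro c
      simp only [mem_sdiff, mem_insert, mem_singleton]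
      tauto
    refine Set.Pairwise.mono (coe_subset.2 hsub) ?_
    rw [coe_insert]
    refine hB.insert_of_forall_not_adj fun c hc hadj => ?_
    simp only [mem_coe, mem_sdiff, mem_insert, mem_singleton] at hc
    exact hc.1.2 (Or.inl (hv_nbr c hc.1.1 hadj))

theorem exists_isIndepSplit_card_filter (heavy : α → Bool) (S : Finset α)
    (hdeg : ∀ a b c : α, a ∈ S → b ∈ S → c ∈ S → G.Adj a b → G.Adj b c → a = c)
    (hcol : ∀ a b : α, a ∈ S → b ∈ S → G.Adj a b → heavy a ≠ heavy b)
    (hpar : #(S.filter (heavy · = true)) % 2 = #(S.filter (heavy · = false)) % 2) :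
    ∃ A, IsIndepSplit G S A ∧
      #(A.filter (heavy · = true)) = (#(S.filter (heavy · = true)) + 1) / 2 ∧
      #(A.filter (heavy · = false)) = #(S.filter (heavy · = false)) / 2 := by
  induction S using Finset.strongInduction with
  | H S ih =>
  by_cases hE : ∀ a ∈ S, ∀ b ∈ S, ¬ G.Adj a b
  · obtain ⟨A, hAS, hH, hL⟩ := exists_subset_card_filter_eq S heavy
      (k := (#(S.filter (heavy · = true)) + 1) / 2) (m := #(S.filter (heavy · = false)) / 2)
      (by omega) (by omega)
    exact ⟨A, isIndepSplit_of_forall_not_adj hE hAS, hH, hL⟩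
  obtain ⟨x, hx, y, hy, hxy, hxH, hyL⟩ := exists_adj_true_false heavy hcol hE
  have hx_nbr : ∀ c ∈ S, G.Adj x c → c = y := fun c hc h => (hdeg y x c hy hx hc hxy.symm h).symm
  have hy_nbr : ∀ c ∈ S, G.Adj y c → c = x := fun c hc h => (hdeg x y c hx hy hc hxy h).symm
  have hTS : S \ {x, y} ⊆ S := sdiff_subset
  have hxyS : {x, y} ⊆ S := insert_subset hx (singleton_subset_iff.2 hy)
  have hpair (p : α → Prop) [DecidablePred p] := card_filter_sdiff_add_card_filter p hxyS
  have hpairH : #(({x, y} : Finset α).filter (heavy · = true)) = 1 := by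
    simp [filter_insert, filter_singleton, hxH, hyL]
  have hpairL : #(({x, y} : Finset α).filter (heavy · = false)) = 1 := by
    simp [filter_insert, filter_singleton, hxH, hyL]
  have hcardH := hpair (heavy · = true)
  have hcardL := hpair (heavy · = false)
  obtain ⟨A, hA, hAH, hAL⟩ := ih (S \ {x, y}) (sdiff_ssubset hxyS (insert_nonempty _ _))
    (fun a b c ha hb hc => hdeg a b c (hTS ha) (hTS hb) (hTS hc))
    (fun a b ha hb => hcol a b (hTS ha) (hTS hb)) (by omega)
  have hxA : x ∉ A := fun h => by simpa using hA.1 h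
  have hyA : y ∉ A := fun h => by simpa using hA.1 h
  by_cases hTH : #((S \ {x, y}).filter (heavy · = true)) % 2 = 0
  · refine ⟨insert x A, hA.insert_of_isolated_edge hx hx_nbr hy_nbr, ?_, ?_⟩ <;>
      simp [card_filter_insert_of_notMem _ hxA, hxH] <;> omega
  · rw [pair_comm] at hA
    refine ⟨insert y A, hA.insert_of_isolated_edge hy hy_nbr hx_nbr, ?_, ?_⟩ <;>
      simp [card_filter_insert_of_notMem _ hyA, hyL] <;> omega

end Split

lemma adj_iff_hasse_adj {a b : ℕ} : adj a b ↔ (hasse ℕ).Adj a b := by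
  simp [adj, hasse_adj]

lemma Indep.of_isIndepSet_hasse {A : Finset ℕ} (hA : (hasse ℕ).IsIndepSet (A : Set ℕ)) :
    Indep A := fun a ha b hb hab =>
  hA ha hb (by rintro rfl; exact (hasse ℕ).irrefl (adj_iff_hasse_adj.1 hab))
    (adj_iff_hasse_adj.1 hab)

theorem two_agent_subproblem
    (S : Finset ℕ)                -- chores received by the meta agent
    (heavy : ℕ → Bool)            -- heavy/light labels
    -- the induced graph on S is a disjoint union of isolated vertices and edges
    (hcomp : ∀ a b c : ℕ, a ∈ S → b ∈ S → c ∈ S → adj a b → adj b c → a = c)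
    -- every edge joins one heavy and one light chore
    (hedge : ∀ a b : ℕ, a ∈ S → b ∈ S → adj a b → heavy a ≠ heavy b)
    -- the numbers of heavy and of light chores are both even
    (hH : Even ((S.filter (fun c => heavy c = true)).card))
    (hL : Even ((S.filter (fun c => heavy c = false)).card)) :
    ∃ A B : Finset ℕ,
      Disjoint A B ∧ A ∪ B = S ∧ Indep A ∧ Indep B ∧
      (A.filter (fun c => heavy c = true)).card
        = (B.filter (fun c => heavy c = true)).card ∧
      (A.filter (fun c => heavy c = false)).card
        = (B.filter (fun c => heavy c = false)).card := by
  rw [Nat.even_iff] at hH hL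
  obtain ⟨A, ⟨hAS, hA, hB⟩, hAH, hAL⟩ := exists_isIndepSplit_card_filter (G := hasse ℕ) heavy S
    (by simpa only [adj_iff_hasse_adj] using hcomp) (by simpa only [adj_iff_hasse_adj] using hedge)
    (by omega)
  have hH' := card_filter_sdiff_add_card_filter (heavy · = true) hAS
  have hL' := card_filter_sdiff_add_card_filter (heavy · = false) hAS
  exact ⟨A, S \ A, disjoint_sdiff, union_sdiff_of_subset hAS, .of_isIndepSet_hasse hA,
    .of_isIndepSet_hasse hB, by omega, by omega⟩

end Stmt15
end

section
/- For n agents with identical additive valuations over chores whose conflict graph has every connected component of size at most n, there exists an EF1 and maximal (indeed complete) schedule, computable in polynomial time: allocate each component's chores via round robin using the topological order of the (acyclic, by identical valuations) envy graph of the partial schedule. -/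
/-!
Chores are handed out one connected component at a time. A component has at most `n` chores, so
they can go to pairwise distinct agents, which keeps every bundle independent. Within a round the
agents are taken worst-off first (a topological order of the envy graph, acyclic because the
valuations are identical) and the component's chores best first. The invariant carried from round
to round is EF1 with a worst chore of the envious bundle as the removed chore: since all values are
non-positive, a short case analysis on whether that worst chore is the one just received shows that
a round preserves it.
-/

namespace Stmt18

open Finset Function

variable {ι α R : Type*}

theorem exists_equiv_fin_monotone [Fintype ι] [LinearOrder R] (f : ι → R) :
    ∃ e : Fin (Fintype.card ι) ≃ ι, Monotone (f ∘ e) :=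
  let e₀ := (Fintype.equivFin ι).symm
  ⟨(Tuple.sort (f ∘ e₀)).trans e₀, Tuple.monotone_sort (f ∘ e₀)⟩

theorem sum_eq_of_card_le_one [AddCommMonoid R] {s : Finset α} {c : α} (f : α → R)
    (hs : #s ≤ 1) (hc : c ∈ s) : ∑ x ∈ s, f x = f c :=
  sum_eq_single_of_mem c hc fun b hb hbc => absurd (card_le_one.mp hs b hb c hc) hbc

theorem exists_injective_assignment [Fintype ι] [LinearOrder R] (w : ι → R) (v : α → R)
    (T : Finset α) (hT : #T ≤ Fintype.card ι) :
    ∃ a : T → ι, Injective a ∧ ∀ c j, w (a c) < w j → ∃ d, a d = j ∧ v d ≤ v c := by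
  obtain ⟨eT, heT⟩ := exists_equiv_fin_monotone fun c : T => v c
  obtain ⟨eι, heι⟩ := exists_equiv_fin_monotone fun i => OrderDual.toDual (w i)
  have hanti : Antitone (w ∘ eι) := monotone_toDual_comp_iff.mp heι
  have hcard : Fintype.card T ≤ Fintype.card ι := by simpa using hT
  refine ⟨fun c => eι (Fin.castLE hcard (eT.symm c)), fun c d h => by simpa using h, ?_⟩
  intro c j hlt
  have hq : eι.symm j < Fin.castLE hcard (eT.symm c) := by
    by_contra! hle
    have hle' := hanti hle
    simp only [comp_apply, Equiv.apply_symm_apply] at hle'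
    exact hle'.not_gt hlt
  let k : Fin (Fintype.card T) := ⟨eι.symm j, (Fin.lt_def.mp hq).trans (eT.symm c).2⟩
  refine ⟨eT k, by simp [k], ?_⟩
  simpa using heT (show k ≤ eT.symm c from hq.le)

/-- One round of round robin along a topological order of the envy graph: the chores of `T` go to
distinct agents, and an agent who envies another gets a chore at least as good as the other's. -/
theorem exists_round_robin [Fintype ι] [LinearOrder R] (w : ι → R) (v : α → R)
    (T : Finset α) (hT : #T ≤ Fintype.card ι) :
    ∃ N : ι → Finset α, (∀ i, N i ⊆ T) ∧ (∀ i, #(N i) ≤ 1) ∧ Pairwise (Disjoint on N) ∧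
      (∀ c ∈ T, ∃ i, c ∈ N i) ∧
      ∀ i, ∀ c ∈ N i, ∀ j, w i < w j → ∃ d ∈ N j, v d ≤ v c := by
  classical
  obtain ⟨a, ha_inj, ha_prio⟩ := exists_injective_assignment w v T hT
  refine ⟨fun i => (univ.filter (a · = i)).map (Embedding.subtype _), ?_, ?_, ?_, ?_, ?_⟩
  · intro i x hx
    obtain ⟨c, -, rfl⟩ := mem_map.mp hx
    exact c.2
  · intro i
    rw [card_map, card_le_one]
    intro c hc d hd
    exact ha_inj ((mem_filter.mp hc).2.trans (mem_filter.mp hd).2.symm)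
  · intro i j hij
    refine disjoint_left.mpr fun x hxi hxj => ?_
    obtain ⟨c, hci, rfl⟩ := mem_map.mp hxi
    obtain ⟨d, hdj, hdc⟩ := mem_map.mp hxj
    rw [Subtype.val_injective hdc] at hdj
    exact hij ((mem_filter.mp hci).2.symm.trans (mem_filter.mp hdj).2)
  · intro c hc
    exact ⟨a ⟨c, hc⟩, mem_map.mpr ⟨⟨c, hc⟩, by simp, rfl⟩⟩
  · intro i x hx j hlt
    obtain ⟨c, hci, rfl⟩ := mem_map.mp hx
    rw [(mem_filter.mp hci).2.symm] at hlt
    obtain ⟨d, rfl, hd⟩ := ha_prio c j hlt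
    exact ⟨d, mem_map.mpr ⟨d, by simp, rfl⟩, hd⟩

section EF1

variable [AddCommGroup R] [LinearOrder R]

def EF1ByWorstChore (v : α → R) (X : ι → Finset α) : Prop :=
  ∀ i j, ∀ c ∈ X i, (∀ b ∈ X i, v c ≤ v b) → ∑ x ∈ X j, v x ≤ ∑ x ∈ X i, v x - v c

theorem EF1ByWorstChore.of_empty (v : α → R) : EF1ByWorstChore v fun _ : ι => (∅ : Finset α) :=
  fun _ _ _ hc => absurd hc (notMem_empty _)

theorem EF1ByWorstChore.exists_le_sum_erase [DecidableEq α] {v : α → R} {X : ι → Finset α}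
    (h : EF1ByWorstChore v X) (i j : ι) (hi : (X i).Nonempty) :
    ∃ c ∈ X i, ∑ x ∈ X j, v x ≤ ∑ x ∈ (X i).erase c, v x := by
  obtain ⟨c, hc, hworst⟩ := exists_min_image (X i) v hi
  exact ⟨c, hc, by rw [sum_erase_eq_sub hc]; exact h i j c hc hworst⟩

theorem EF1ByWorstChore.union [IsOrderedAddMonoid R] [DecidableEq α] {v : α → R}
    {X N : ι → Finset α}
    (hv : ∀ x, v x ≤ 0) (hX : EF1ByWorstChore v X) (hN : ∀ i, #(N i) ≤ 1)
    (hXN : ∀ i, Disjoint (X i) (N i))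
    (hprio : ∀ i, ∀ c ∈ N i, ∀ j, ∑ x ∈ X i, v x < ∑ x ∈ X j, v x → ∃ d ∈ N j, v d ≤ v c) :
    EF1ByWorstChore v fun i => X i ∪ N i := by
  intro i j c₀ hc₀ hworst
  simp only [sum_union (hXN i), sum_union (hXN j)]
  have hnonpos : ∀ s : Finset α, ∑ x ∈ s, v x ≤ 0 := fun s => sum_nonpos fun x _ => hv x
  have hc₀_le : v c₀ ≤ ∑ x ∈ N i, v x := by
    rcases (N i).eq_empty_or_nonempty with h | ⟨c, hc⟩
    · simpa [h] using hv c₀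
    · rw [sum_eq_of_card_le_one v (hN i) hc]
      exact hworst c (mem_union_right _ hc)
  by_cases hji : ∑ x ∈ X j, v x ≤ ∑ x ∈ X i, v x
  · grind [hnonpos (N j)]
  rw [not_le] at hji
  have hN_le : ∑ x ∈ N j, v x ≤ ∑ x ∈ N i, v x := by
    rcases (N i).eq_empty_or_nonempty with h | ⟨c, hc⟩
    · simpa [h] using hnonpos (N j)
    · obtain ⟨d, hd, hdc⟩ := hprio i c hc j hji
      rwa [sum_eq_of_card_le_one v (hN i) hc, sum_eq_of_card_le_one v (hN j) hd]
  by_cases hc₀X : c₀ ∈ X i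
  · grind [hX i j c₀ hc₀X fun b hb => hworst b (mem_union_left _ hb)]
  have hc₀N : c₀ ∈ N i := (mem_union.mp hc₀).resolve_left hc₀X
  rw [sum_eq_of_card_le_one v (hN i) hc₀N] at hN_le ⊢
  rcases (X i).eq_empty_or_nonempty with h | hne
  · grind [sum_empty, hnonpos (X j), hnonpos (N j)]
  · obtain ⟨c₁, hc₁, hworst₁⟩ := exists_min_image (X i) v hne
    grind [hX i j c₁ hc₁ hworst₁, hworst c₁ (mem_union_left _ hc₁)]

end EF1

theorem isIndepSet_union {G : SimpleGraph α} [DecidableEq α] {X N : Finset α}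
    (hX : G.IsIndepSet (X : Set α)) (hN : #N ≤ 1) (hXN : ∀ a ∈ X, ∀ b ∈ N, ¬ G.Reachable a b) :
    G.IsIndepSet (↑(X ∪ N) : Set α) := by
  intro a ha b hb hab hadj
  simp only [coe_union, Set.mem_union, mem_coe] at ha hb
  rcases ha with ha | ha <;> rcases hb with hb | hb
  · exact hX ha hb hab hadj
  · exact hXN a ha b hb hadj.reachable
  · exact hXN b hb a ha hadj.symm.reachable
  · exact hab (card_le_one.mp hN a ha b hb)

theorem exists_EF1ByWorstChore_schedule [Fintype ι] [Finite α] [AddCommGroup R] [LinearOrder R]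
    [IsOrderedAddMonoid R] (G : SimpleGraph α) (v : α → R) (hv : ∀ x, v x ≤ 0)
    (S : Finset G.ConnectedComponent) (hS : ∀ C ∈ S, C.supp.ncard ≤ Fintype.card ι) :
    ∃ X : ι → Finset α, Pairwise (Disjoint on X) ∧ (∀ i, G.IsIndepSet (X i : Set α)) ∧
      (∀ x, (∃ i, x ∈ X i) ↔ G.connectedComponentMk x ∈ S) ∧ EF1ByWorstChore v X := by
  classical
  induction S using Finset.induction_on with
  | empty =>
    exact ⟨fun _ => ∅, fun _ _ _ => disjoint_empty_left _, fun _ => by simp,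
      fun _ => by simp, EF1ByWorstChore.of_empty v⟩
  | insert C S hCS ih =>
    obtain ⟨X, hdisj, hind, hcov, hef⟩ := ih fun D hD => hS D (mem_insert_of_mem hD)
    set T := (Set.toFinite C.supp).toFinset
    have hmemT : ∀ x, x ∈ T ↔ G.connectedComponentMk x = C := by simp [T]
    have hT : #T ≤ Fintype.card ι := by
      rw [← Set.ncard_eq_toFinset_card]
      exact hS C (mem_insert_self C S)
    have hsep : ∀ i, ∀ a ∈ X i, ∀ b ∈ T, ¬ G.Reachable a b := by
      intro i a ha b hb hab
      apply hCS
      rw [← (hmemT b).1 hb, ← SimpleGraph.ConnectedComponent.eq.mpr hab]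
      exact (hcov a).1 ⟨i, ha⟩
    obtain ⟨N, hNT, hN1, hNdisj, hNcov, hprio⟩ :=
      exists_round_robin (fun i => ∑ x ∈ X i, v x) v T hT
    have hXN : ∀ i j, Disjoint (X i) (N j) := fun i j =>
      disjoint_left.mpr fun x hx hxN => hsep i x hx x (hNT j hxN) (.refl x)
    refine ⟨fun i => X i ∪ N i, ?_, ?_, ?_, hef.union hv hN1 (fun i => hXN i i) hprio⟩
    · intro i j hij
      simp only [onFun, disjoint_union_left, disjoint_union_right]
      exact ⟨⟨hdisj hij, (hXN j i).symm⟩, hXN i j, hNdisj hij⟩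
    · exact fun i => isIndepSet_union (hind i) (hN1 i) fun a ha b hb => hsep i a ha b (hNT i hb)
    · intro x
      simp only [mem_union, exists_or, mem_insert, hcov x]
      constructor
      · rintro (hx | ⟨i, hx⟩)
        · exact .inr hx
        · exact .inl ((hmemT x).1 (hNT i hx))
      · rintro (hx | hx)
        · exact .inr (hNcov x ((hmemT x).2 hx))
        · exact .inl hx

theorem EF1_complete_exists_identical_bounded_components (n m : ℕ)
    (G : SimpleGraph (Fin m))
    -- identical additive valuation with non-positive chore values
    (v : Fin m → ℤ) (hv : ∀ j, v j ≤ 0)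
    -- every connected component has at most n vertices
    (hcomp : ∀ c : Fin m, Set.ncard {d : Fin m | G.Reachable c d} ≤ n) :
    ∃ X : Fin n → Finset (Fin m),
      -- feasible: pairwise disjoint independent bundles
      (∀ i j, i ≠ j → Disjoint (X i) (X j)) ∧
      (∀ i, ∀ a ∈ X i, ∀ b ∈ X i, ¬ G.Adj a b) ∧
      -- complete: every chore is assigned
      (∀ c : Fin m, ∃ i, c ∈ X i) ∧
      -- maximal: no unassigned chore can be added to any bundle
      (∀ c : Fin m, (∀ i, c ∉ X i) → ∀ i, ∃ a ∈ X i, G.Adj a c) ∧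
      -- EF1
      (∀ i j, (X i).Nonempty →
        ∃ c ∈ X i, ∑ x ∈ (X i).erase c, v x ≥ ∑ x ∈ X j, v x) := by
  classical
  have hsupp : ∀ C : G.ConnectedComponent, C.supp.ncard ≤ Fintype.card (Fin n) := by
    refine SimpleGraph.ConnectedComponent.ind fun c => ?_
    convert hcomp c using 2
    · ext d
      simp [SimpleGraph.ConnectedComponent.eq, SimpleGraph.reachable_comm]
    · simp
  obtain ⟨X, hdisj, hind, hcov, hef⟩ :=
    exists_EF1ByWorstChore_schedule G v hv (univ.image G.connectedComponentMk) fun C _ => hsupp C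
  have hcomplete : ∀ c, ∃ i, c ∈ X i := fun c => (hcov c).2 (mem_image_of_mem _ (mem_univ c))
  refine ⟨X, fun i j hij => hdisj hij, fun i a ha b hb hadj => hind i ha hb hadj.ne hadj,
    hcomplete, fun c hc => absurd (hcomplete c) (not_exists.mpr hc),
    fun i j hi => hef.exists_le_sum_erase i j hi⟩

end Stmt18
end

section
/- If all chores are valued identically at some value w < 0 by all agents and the conflict graph is an interval graph, then for any number n of agents, processing the intervals in increasing order of finish time and always assigning each feasible chore to an agent with the currently fewest chores (skipping chores that conflict with all n bundles) yields a maximal schedule in which any two bundles differ in size by at most one; such a schedule is EF1. -/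
/-!
Process the chores by increasing finish time, giving each one to a smallest bundle among those
whose chores all finish before it starts, and skipping it if there is none. A skipped chore
overlaps the chore finishing last in every bundle, and bundles only grow, so the outcome is
maximal. Balance rests on the invariant that a smaller bundle never finishes later than a larger
one: a bundle that cannot take the current chore finishes after its start, so every bundle that
can take it is at least as small, and the chosen bundle is a smallest one overall. With identical
values `w * |S|`, `w < 0`, balance gives EF1 after removing any chore of the larger bundle.
-/

namespace Stmt19

/-- Two distinct intervals conflict iff they overlap. -/
def overlap (m : ℕ) (s f : Fin m → ℤ) (i j : Fin m) : Prop :=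
  i ≠ j ∧ s i < f j ∧ s j < f i

def Indep (m : ℕ) (s f : Fin m → ℤ) (S : Finset (Fin m)) : Prop :=
  ∀ i ∈ S, ∀ j ∈ S, ¬ overlap m s f i j

open Finset

lemma ef1_of_card_le_card_add_one {ι α : Type*} [DecidableEq α] {w : ℤ} (hw : w < 0)
    {X : ι → Finset α} (hbal : ∀ i j, #(X i) ≤ #(X j) + 1) (i j : ι) (hne : (X i).Nonempty) :
    ∃ c ∈ X i, w * (#((X i).erase c) : ℤ) ≥ w * (#(X j) : ℤ) := by
  obtain ⟨c, hc⟩ := hne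
  refine ⟨c, hc, mul_le_mul_of_nonpos_left ?_ hw.le⟩
  have := hbal i j
  rw [card_erase_of_mem hc]
  omega

section UpdateInsert

variable {ι α : Type*} [DecidableEq ι] [DecidableEq α] {X : ι → Finset α} {a i : ι} {c : α}

lemma mem_update_insert {x : α} :
    x ∈ Function.update X a (insert c (X a)) i ↔ x ∈ X i ∨ i = a ∧ x = c := by
  rcases eq_or_ne i a with rfl | h <;> simp [*, or_comm]

lemma subset_update_insert : X i ⊆ Function.update X a (insert c (X a)) i :=
  fun _ hx => mem_update_insert.2 (Or.inl hx)

lemma card_update_insert (hc : c ∉ X a) :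
    #(Function.update X a (insert c (X a)) i) = #(X i) + if i = a then 1 else 0 := by
  rcases eq_or_ne i a with rfl | h
  · simp [card_insert_of_notMem hc]
  · simp [h]

lemma pairwise_disjoint_update_insert (hX : ∀ i j, i ≠ j → Disjoint (X i) (X j))
    (hc : ∀ i, c ∉ X i) (i j : ι) (hij : i ≠ j) :
    Disjoint (Function.update X a (insert c (X a)) i) (Function.update X a (insert c (X a)) j) := by
  simp only [disjoint_left, mem_update_insert]
  rintro x (hx | ⟨hi, hxc⟩) (hy | ⟨hj, hyc⟩)
  · exact disjoint_left.1 (hX i j hij) hx hy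
  · exact hc i (hyc ▸ hx)
  · exact hc j (hxc ▸ hy)
  · exact hij (hi.trans hj.symm)

end UpdateInsert

section Greedy

variable {m n : ℕ} {s f : Fin m → ℤ}

lemma Indep.mono {S T : Finset (Fin m)} (hT : Indep m s f T) (hST : S ⊆ T) : Indep m s f S :=
  fun i hi j hj => hT i (hST hi) j (hST hj)

lemma Indep.insert_of_forall_finish_le {S : Finset (Fin m)} {c : Fin m} (hS : Indep m s f S)
    (hc : ∀ x ∈ S, f x ≤ s c) : Indep m s f (insert c S) := by
  intro i hi j hj hij
  rw [mem_insert] at hi hj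
  rcases hi with rfl | hi <;> rcases hj with rfl | hj
  · exact hij.1 rfl
  · exact (hc j hj).not_gt hij.2.1
  · exact (hc i hi).not_gt hij.2.2
  · exact hS i hi j hj hij

/-- The bundles `X` of the greedy procedure at the moment when exactly the chores in `R` remain
to be processed. -/
structure IsGreedyState (s f : Fin m → ℤ) (X : Fin n → Finset (Fin m)) (R : Finset (Fin m)) :
    Prop where
  disjoint : ∀ i j, i ≠ j → Disjoint (X i) (X j)
  indep : ∀ i, Indep m s f (X i)
  balanced : ∀ i j, #(X i) ≤ #(X j) + 1
  disjoint_remaining : ∀ i, Disjoint (X i) R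
  finish_le_remaining : ∀ i, ∀ x ∈ X i, ∀ c ∈ R, f x ≤ f c
  finish_le_of_card_lt : ∀ i j, #(X i) < #(X j) → ∀ x ∈ X i, ∃ y ∈ X j, f x ≤ f y
  maximal : ∀ c ∉ R, (∀ i, c ∉ X i) → ∀ i, ¬ Indep m s f (insert c (X i))

lemma isGreedyState_univ : IsGreedyState s f (fun _ : Fin n => ∅) univ where
  disjoint _ _ _ := disjoint_empty_left _
  indep _ := by simp [Indep]
  balanced := by simp
  disjoint_remaining _ := disjoint_empty_left _
  finish_le_remaining := by simp
  finish_le_of_card_lt := by simp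
  maximal := by simp

namespace IsGreedyState

variable {X : Fin n → Finset (Fin m)} {R : Finset (Fin m)} {c : Fin m}

lemma exists_card_min_of_fits (hX : IsGreedyState s f X R) (h : ∃ i, ∀ x ∈ X i, f x ≤ s c) :
    ∃ a, (∀ x ∈ X a, f x ≤ s c) ∧ ∀ j, #(X a) ≤ #(X j) := by
  classical
  obtain ⟨a, ha, hmin⟩ := exists_min_image ({i | ∀ x ∈ X i, f x ≤ s c} : Finset _)
    (fun i => #(X i)) (by obtain ⟨i, hi⟩ := h; exact ⟨i, by simpa using hi⟩)
  rw [mem_filter] at ha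
  refine ⟨a, ha.2, fun j => ?_⟩
  by_cases hj : ∀ x ∈ X j, f x ≤ s c
  · exact hmin j (mem_filter.2 ⟨mem_univ _, hj⟩)
  · push Not at hj
    obtain ⟨y, hy, hcy⟩ := hj
    by_contra! hlt
    obtain ⟨z, hz, hyz⟩ := hX.finish_le_of_card_lt j a hlt y hy
    exact (hyz.trans (ha.2 z hz)).not_gt hcy

lemma skip (hsf : ∀ i, s i < f i) (hX : IsGreedyState s f X R) (hcR : c ∈ R)
    (hblocked : ∀ i, ∃ x ∈ X i, s c < f x) : IsGreedyState s f X (R.erase c) where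
  __ := hX
  disjoint_remaining i := (hX.disjoint_remaining i).mono_right (erase_subset _ _)
  finish_le_remaining i x hx c' hc' := hX.finish_le_remaining i x hx c' (mem_of_mem_erase hc')
  maximal c' hc' hnot i := by
    rcases eq_or_ne c' c with rfl | hne
    · obtain ⟨x, hx, hcx⟩ := hblocked i
      refine fun hind => hind c' (mem_insert_self _ _) x (mem_insert_of_mem hx) ⟨?_, hcx, ?_⟩
      · exact fun h => disjoint_left.1 (hX.disjoint_remaining i) (h ▸ hx) hcR
      · exact (hsf x).trans_le (hX.finish_le_remaining i x hx c' hcR)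
    · exact hX.maximal c' (fun h => hc' (mem_erase.2 ⟨hne, h⟩)) hnot i

lemma finish_le_of_card_lt_update_insert (hX : IsGreedyState s f X R) (hcR : c ∈ R) {a : Fin n}
    (i j : Fin n) (hlt : #(Function.update X a (insert c (X a)) i) <
      #(Function.update X a (insert c (X a)) j))
    (x : Fin m) (hx : x ∈ Function.update X a (insert c (X a)) i) :
    ∃ y ∈ Function.update X a (insert c (X a)) j, f x ≤ f y := by
  have hcX : c ∉ X a := fun hc => disjoint_left.1 (hX.disjoint_remaining a) hc hcR
  rw [card_update_insert hcX, card_update_insert hcX] at hlt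
  rcases eq_or_ne j a with rfl | hj
  · refine ⟨c, by simp, ?_⟩
    rcases mem_update_insert.1 hx with hx | ⟨-, rfl⟩
    · exact hX.finish_le_remaining i x hx c hcR
    · exact le_rfl
  · have hi : i ≠ a := by
      rintro rfl
      have := hX.balanced j i
      simp only [hj, if_true, if_false] at hlt
      omega
    simp only [hi, hj, if_false, add_zero] at hlt
    rw [Function.update_of_ne hi] at hx
    obtain ⟨y, hy, hxy⟩ := hX.finish_le_of_card_lt i j hlt x hx
    exact ⟨y, by rwa [Function.update_of_ne hj], hxy⟩

lemma assign (hX : IsGreedyState s f X R) (hcR : c ∈ R) (hfirst : ∀ c' ∈ R, f c ≤ f c')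
    {a : Fin n} (hfit : ∀ x ∈ X a, f x ≤ s c) (hmin : ∀ j, #(X a) ≤ #(X j)) :
    IsGreedyState s f (Function.update X a (insert c (X a))) (R.erase c) := by
  have hcX : ∀ i, c ∉ X i := fun i hc => disjoint_left.1 (hX.disjoint_remaining i) hc hcR
  refine ⟨pairwise_disjoint_update_insert hX.disjoint hcX, fun i => ?_, fun i j => ?_,
    fun i => ?_, fun i x hx c' hc' => ?_, fun i j hlt x hx => ?_, fun c' hc' hnot i hind => ?_⟩
  · rcases eq_or_ne i a with rfl | h
    · simpa using (hX.indep i).insert_of_forall_finish_le hfit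
    · simpa [h] using hX.indep i
  · have := hX.balanced i j
    have := hmin j
    rw [card_update_insert (hcX a), card_update_insert (hcX a)]
    split_ifs <;> subst_vars <;> omega
  · simp only [disjoint_left, mem_update_insert, mem_erase]
    rintro x (hx | ⟨-, rfl⟩) ⟨hne, hxR⟩
    · exact disjoint_left.1 (hX.disjoint_remaining i) hx hxR
    · exact hne rfl
  · rcases mem_update_insert.1 hx with hx | ⟨-, rfl⟩
    · exact hX.finish_le_remaining i x hx c' (mem_of_mem_erase hc')
    · exact hfirst c' (mem_of_mem_erase hc')
  · exact hX.finish_le_of_card_lt_update_insert hcR i j hlt x hx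
  · have hne : c' ≠ c := by
      rintro rfl
      exact hnot a (by simp)
    exact hX.maximal c' (fun h => hc' (mem_erase.2 ⟨hne, h⟩))
      (fun j hj => hnot j (subset_update_insert hj)) i
      (hind.mono (insert_subset_insert _ subset_update_insert))

lemma exists_erase (hsf : ∀ i, s i < f i) (hX : IsGreedyState s f X R) (hcR : c ∈ R)
    (hfirst : ∀ c' ∈ R, f c ≤ f c') :
    ∃ Y : Fin n → Finset (Fin m), IsGreedyState s f Y (R.erase c) := by
  by_cases hfits : ∃ i, ∀ x ∈ X i, f x ≤ s c
  · obtain ⟨a, hfit, hmin⟩ := hX.exists_card_min_of_fits hfits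
    exact ⟨_, hX.assign hcR hfirst hfit hmin⟩
  · push Not at hfits
    exact ⟨X, hX.skip hsf hcR hfits⟩

lemma exists_remaining_empty (hsf : ∀ i, s i < f i) (hX : IsGreedyState s f X R) :
    ∃ Y : Fin n → Finset (Fin m), IsGreedyState s f Y ∅ := by
  induction R using Finset.strongInduction generalizing X with
  | H R ih =>
    rcases R.eq_empty_or_nonempty with rfl | hR
    · exact ⟨X, hX⟩
    obtain ⟨c, hcR, hfirst⟩ := R.exists_min_image f hR
    obtain ⟨Y, hY⟩ := hX.exists_erase hsf hcR hfirst
    exact ih _ (erase_ssubset hcR) hY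

end IsGreedyState

end Greedy

theorem balanced_maximal_EF1_identical_values (n m : ℕ)
    (w : ℤ) (hw : w < 0)
    (s f : Fin m → ℤ) (hsf : ∀ i, s i < f i) :
    -- the greedy balanced procedure yields a maximal schedule whose bundle
    -- sizes pairwise differ by at most one, and which is EF1
    (∃ X : Fin n → Finset (Fin m),
      (∀ i j, i ≠ j → Disjoint (X i) (X j)) ∧
      (∀ i, Indep m s f (X i)) ∧
      -- maximal
      (∀ c : Fin m, (∀ i, c ∉ X i) → ∀ i, ¬ Indep m s f (insert c (X i))) ∧
      -- balanced: any two bundles differ in size by at most one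
      (∀ i j, (X i).card ≤ (X j).card + 1) ∧
      -- EF1 (valuation of a bundle S is w * |S|)
      (∀ i j, (X i).Nonempty →
        ∃ c ∈ X i, w * (((X i).erase c).card : ℤ) ≥ w * ((X j).card : ℤ))) ∧
    -- moreover, any balanced feasible schedule is EF1
    (∀ X : Fin n → Finset (Fin m),
      (∀ i j, i ≠ j → Disjoint (X i) (X j)) →
      (∀ i, Indep m s f (X i)) →
      (∀ i j, (X i).card ≤ (X j).card + 1) →
      (∀ i j, (X i).Nonempty →
        ∃ c ∈ X i, w * (((X i).erase c).card : ℤ) ≥ w * ((X j).card : ℤ))) := by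
  obtain ⟨X, hX⟩ := (isGreedyState_univ (n := n)).exists_remaining_empty hsf
  refine ⟨⟨X, hX.disjoint, hX.indep, fun c => hX.maximal c (notMem_empty c), hX.balanced,
    ef1_of_card_le_card_add_one hw hX.balanced⟩, ?_⟩
  exact fun _ _ _ hbal => ef1_of_card_le_card_add_one hw hbal

end Stmt19
end
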